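/- arXiv:1503.03283 — 2 statements merged into one kernel-verified Lean document; each statement's English description precedes it below -/
import Mathlib

section
/- Let p be an odd prime and let a ∈ ZMod p with a ≠ 0. The permutation π⁻¹ ∘ π_{(a,0)} of ZMod p × ZMod p has exactly one fixed point, namely (a·(y−1)⁻¹, 0), and exactly two orbits of size at least 2: one orbit is precisely the set {(a·(y−1)⁻¹, d) : d ∈ ZMod p, d ≠ 0} of size p − 1, and the other orbit has size p² − p and contains (0,0). -/
/-- The map `π_{(a,b)}` on `ZMod p × ZMod p` (with `x` a fixed primitive root mod `p`). -/
def piab {p : ℕ} (x a b : ZMod p) : ZMod p × ZMod p → ZMod p × ZMod p :=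
  fun cd =>
    if cd.1 = 0 then
      if a + b + cd.2 ≠ 0 then (a, a + b + cd.2) else (a + x * b, 0)
    else
      if b + cd.2 = 0 then (a + cd.1 + x * b, 0) else (a + cd.1, b + cd.2)

/-- The composite `π⁻¹ ∘ π_{(a,b)}`, where `π(c,d) = (x⁻¹·c, x·d)`,
so `π⁻¹(c,d) = (x·c, x⁻¹·d)`. -/
def piInvPiab {p : ℕ} (x a b : ZMod p) : ZMod p × ZMod p → ZMod p × ZMod p :=
  fun cd => (x * (piab x a b cd).1, x⁻¹ * (piab x a b cd).2)

/-- The orbit of `u` under `f`: the set `{fᵏ(u) : k ∈ ℕ}`. -/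
def orbit {α : Type*} (f : α → α) (u : α) : Set α :=
  {v | ∃ k : ℕ, f^[k] u = v}

/-- The set `𝓘⁽²⁾ = {(0,1), (1,0)} ∪ {(z,z) : z ≠ 0} ∪ {(z, z·x) : z ≠ 0}`. -/
def I2 (p : ℕ) (x : ZMod p) : Set (ZMod p × ZMod p) :=
  {q | q = (0, 1) ∨ q = (1, 0) ∨ (q.1 ≠ 0 ∧ q.2 = q.1) ∨ (q.1 ≠ 0 ∧ q.2 = q.1 * x)}

/-!
For `b = 0` the map acts by `(c, d) ↦ (x (a + c), x⁻¹ (d + [c = 0] a))`. Its first coordinate is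
the affine map `c ↦ c₀ + x (c - c₀)` with fixed point `c₀ = a (x⁻¹ - 1)⁻¹`, so the line `c = c₀` is
invariant, and on it `d ↦ x⁻¹ d` cycles through the nonzero `d` because `x` is a primitive root.
Off that line the first coordinate runs through all `c ≠ c₀`; over one period `orderOf x` of it
the point `(0, e)` returns to `(0, a + e)`, since `c = 0` is hit exactly once. As `a ≠ 0`, the orbit
of `(0, 0)` contains every `(0, e)`, and every point off the line reaches some `(0, e)`.
-/

open Function

theorem orbit_perm_eq_setOf_sameCycle {α : Type*} [Finite α] (σ : Equiv.Perm α) (u : α) :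
    orbit σ u = {w | σ.SameCycle u w} := by
  ext w
  constructor
  · rintro ⟨k, rfl⟩
    exact ⟨k, by simp [← Equiv.Perm.iterate_eq_pow]⟩
  · intro h
    obtain ⟨k, -, hk⟩ := h.exists_pow_eq'
    exact ⟨k, by rw [← Equiv.Perm.iterate_eq_pow] at hk; exact hk⟩

theorem orbit_eq_of_mem_orbit {α : Type*} [Finite α] {f : α → α} (hf : Injective f) {u w : α}
    (hw : w ∈ orbit f u) : orbit f w = orbit f u := by
  let σ := Equiv.ofBijective f hf.bijective_of_finite
  change w ∈ orbit σ u at hw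
  change orbit σ w = orbit σ u
  simp only [orbit_perm_eq_setOf_sameCycle] at hw ⊢
  ext v
  exact ⟨hw.trans, hw.symm.trans⟩

theorem orbit_eq_singleton {α : Type*} {f : α → α} {u : α} (h : IsFixedPt f u) :
    orbit f u = {u} := by
  ext w
  exact ⟨fun ⟨k, hk⟩ => hk ▸ (h.iterate k).eq, fun hw => ⟨0, hw.symm⟩⟩

theorem ncard_fst_eq_snd_ne {K : Type*} [Finite K] (c z : K) :
    {q : K × K | q.1 = c ∧ q.2 ≠ z}.ncard = Nat.card K - 1 := by
  have : {q : K × K | q.1 = c ∧ q.2 ≠ z} = {c} ×ˢ {z}ᶜ := by ext; simp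
  rw [this, Set.ncard_prod, Set.ncard_singleton, Set.ncard_compl, Set.ncard_singleton, one_mul]

theorem ncard_fst_ne {K : Type*} [Finite K] (c : K) :
    {q : K × K | q.1 ≠ c}.ncard = Nat.card K ^ 2 - Nat.card K := by
  have : {q : K × K | q.1 ≠ c} = {c}ᶜ ×ˢ Set.univ := by ext; simp
  rw [this, Set.ncard_prod, Set.ncard_compl, Set.ncard_singleton, Set.ncard_univ, Nat.sub_mul,
    one_mul, sq]

theorem ne_zero_and_ne_one_of_forall_pow_eq {R : Type*} [Ring R] (hR : (-1 : R) ≠ 1) {x : R}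
    (hx : ∀ z : R, z ≠ 0 → ∃ k : ℕ, x ^ k = z) : x ≠ 0 ∧ x ≠ 1 := by
  have hR0 : (-1 : R) ≠ 0 := fun h =>
    hR (h.trans (by simpa using congrArg (- ·) h : (1 : R) = 0).symm)
  obtain ⟨k, hk⟩ := hx (-1) hR0
  refine ⟨?_, ?_⟩ <;> rintro rfl
  · rcases k with _ | k
    · exact hR (by simpa using hk.symm)
    · exact hR0 (by simpa using hk.symm)
  · exact hR (by simpa using hk.symm)

theorem mul_add_mul_inv_sub_one {K : Type*} [Field K] {x : K} (hx0 : x ≠ 0) (hx1 : x ≠ 1)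
    (a : K) : x * (a + a * (x⁻¹ - 1)⁻¹) = a * (x⁻¹ - 1)⁻¹ := by
  have : x⁻¹ - 1 ≠ 0 := sub_ne_zero.2 (inv_ne_one.2 hx1)
  field_simp
  ring

section

variable {p : ℕ} {x a c₀ : ZMod p}

theorem piInvPiab_zero_apply (x a : ZMod p) (q : ZMod p × ZMod p) :
    piInvPiab x a 0 q = (x * (a + q.1), x⁻¹ * (q.2 + if q.1 = 0 then a else 0)) := by
  obtain ⟨c, d⟩ := q
  by_cases hc : c = 0
  · by_cases hd : a + d = 0 <;> simp [piInvPiab, piab, hc, hd, add_comm d]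
  · by_cases hd : d = 0 <;> simp [piInvPiab, piab, hc, hd]

theorem fst_piInvPiab_zero_sub (h : x * (a + c₀) = c₀) (q : ZMod p × ZMod p) :
    (piInvPiab x a 0 q).1 - c₀ = x * (q.1 - c₀) := by
  rw [piInvPiab_zero_apply]
  linear_combination h

theorem fst_iterate_piInvPiab_zero_sub (h : x * (a + c₀) = c₀) (q : ZMod p × ZMod p) (k : ℕ) :
    ((piInvPiab x a 0)^[k] q).1 - c₀ = x ^ k * (q.1 - c₀) := by
  induction k with
  | zero => simp
  | succ k ih => rw [iterate_succ_apply', fst_piInvPiab_zero_sub h, ih, pow_succ']; ring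

theorem snd_iterate_piInvPiab_zero_of_fst_ne_zero {q : ZMod p × ZMod p} {k : ℕ}
    (hq : ∀ i < k, ((piInvPiab x a 0)^[i] q).1 ≠ 0) :
    ((piInvPiab x a 0)^[k] q).2 = x⁻¹ ^ k * q.2 := by
  induction k with
  | zero => simp
  | succ k ih =>
    rw [iterate_succ_apply', piInvPiab_zero_apply, if_neg (hq k k.lt_succ_self),
      ih fun i hi => hq i (hi.trans k.lt_succ_self), pow_succ']
    ring

end

section

variable {p : ℕ} [Fact p.Prime] {x a c₀ : ZMod p}

theorem injective_piInvPiab_zero (hx0 : x ≠ 0) : Injective (piInvPiab x a 0) := by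
  intro q r hqr
  rw [piInvPiab_zero_apply, piInvPiab_zero_apply, Prod.mk.injEq] at hqr
  have h1 : q.1 = r.1 := add_left_cancel (mul_left_cancel₀ hx0 hqr.1)
  rw [h1] at hqr
  exact Prod.ext h1 (add_right_cancel (mul_left_cancel₀ (inv_ne_zero hx0) hqr.2))

theorem isFixedPt_piInvPiab_zero_iff (h : x * (a + c₀) = c₀) (hx1 : x ≠ 1) (hc₀ : c₀ ≠ 0)
    {q : ZMod p × ZMod p} : IsFixedPt (piInvPiab x a 0) q ↔ q = (c₀, 0) := by
  constructor
  · intro hq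
    have hq1 : q.1 = c₀ := by
      have := fst_piInvPiab_zero_sub h q
      rw [hq] at this
      have : (x - 1) * (q.1 - c₀) = 0 := by linear_combination -this
      exact sub_eq_zero.1 ((mul_eq_zero.1 this).resolve_left (sub_ne_zero.2 hx1))
    have hq2 := congrArg Prod.snd hq
    rw [piInvPiab_zero_apply, hq1, if_neg hc₀, add_zero] at hq2
    have : (x⁻¹ - 1) * q.2 = 0 := by linear_combination hq2
    exact Prod.ext hq1 ((mul_eq_zero.1 this).resolve_left (sub_ne_zero.2 (inv_ne_one.2 hx1)))
  · rintro rfl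
    simp [IsFixedPt, piInvPiab_zero_apply, h, hc₀]

theorem iterate_piInvPiab_zero_of_fst_eq (h : x * (a + c₀) = c₀) (hc₀ : c₀ ≠ 0) (d : ZMod p)
    (k : ℕ) : (piInvPiab x a 0)^[k] (c₀, d) = (c₀, x⁻¹ ^ k * d) := by
  have hfst (i : ℕ) : ((piInvPiab x a 0)^[i] (c₀, d)).1 = c₀ :=
    sub_eq_zero.1 (by simp [fst_iterate_piInvPiab_zero_sub h])
  exact Prod.ext (hfst k)
    (snd_iterate_piInvPiab_zero_of_fst_ne_zero fun i _ => by rw [hfst]; exact hc₀)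

theorem orbit_piInvPiab_zero_of_fst_eq (h : x * (a + c₀) = c₀) (hx0 : x ≠ 0) (hc₀ : c₀ ≠ 0)
    (hx : ∀ z : ZMod p, z ≠ 0 → ∃ k : ℕ, x ^ k = z) :
    orbit (piInvPiab x a 0) (c₀, 1) = {q | q.1 = c₀ ∧ q.2 ≠ 0} := by
  ext ⟨c, d⟩
  constructor
  · rintro ⟨k, hk⟩
    rw [iterate_piInvPiab_zero_of_fst_eq h hc₀, Prod.mk.injEq] at hk
    obtain ⟨rfl, rfl⟩ := hk
    simp [hx0]
  · rintro ⟨rfl, hd⟩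
    obtain ⟨k, hk⟩ := hx d⁻¹ (inv_ne_zero hd)
    exact ⟨k, by rw [iterate_piInvPiab_zero_of_fst_eq h hc₀, inv_pow, hk, inv_inv, mul_one]⟩

theorem iterate_orderOf_piInvPiab_zero (h : x * (a + c₀) = c₀) (hx0 : x ≠ 0) (hc₀ : c₀ ≠ 0)
    (e : ZMod p) : (piInvPiab x a 0)^[orderOf x] (0, e) = (0, a + e) := by
  have hn : 0 < orderOf x := orderOf_pos_iff.2 <| isOfFinOrder_iff_pow_eq_one.2
    ⟨p - 1, Nat.sub_pos_of_lt (Fact.out : p.Prime).one_lt, ZMod.pow_card_sub_one_eq_one hx0⟩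
  have hfst (i : ℕ) : ((piInvPiab x a 0)^[i] (0, e)).1 = c₀ * (1 - x ^ i) := by
    linear_combination fst_iterate_piInvPiab_zero_sub h (0, e) i
  obtain ⟨m, hm⟩ : ∃ m, orderOf x = m + 1 := ⟨orderOf x - 1, by omega⟩
  rw [hm, iterate_succ_apply]
  refine Prod.ext ?_ ?_
  · rw [← iterate_succ_apply, hfst, Nat.succ_eq_add_one, ← hm, pow_orderOf_eq_one, sub_self,
      mul_zero]
  · have hne (i : ℕ) (hi : i < m) : ((piInvPiab x a 0)^[i] (piInvPiab x a 0 (0, e))).1 ≠ 0 := by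
      rw [← iterate_succ_apply, hfst]
      exact mul_ne_zero hc₀
        (sub_ne_zero.2 (pow_ne_one_of_lt_orderOf i.succ_ne_zero (by omega)).symm)
    rw [snd_iterate_piInvPiab_zero_of_fst_ne_zero hne, piInvPiab_zero_apply, if_pos rfl,
      ← mul_assoc, ← pow_succ, ← hm, inv_pow, pow_orderOf_eq_one, inv_one, one_mul, add_comm]

theorem mem_orbit_piInvPiab_zero_zero (h : x * (a + c₀) = c₀) (hx0 : x ≠ 0) (hc₀ : c₀ ≠ 0)
    (ha : a ≠ 0) (e : ZMod p) : (0, e) ∈ orbit (piInvPiab x a 0) (0, 0) := by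
  have hmul (t : ℕ) : (piInvPiab x a 0)^[orderOf x * t] (0, 0) = (0, t * a) := by
    induction t with
    | zero => simp
    | succ t ih =>
      rw [Nat.mul_succ, add_comm, iterate_add_apply, ih, iterate_orderOf_piInvPiab_zero h hx0 hc₀]
      push_cast
      ring_nf
  refine ⟨orderOf x * (e * a⁻¹).val, ?_⟩
  rw [hmul, ZMod.natCast_zmod_val, inv_mul_cancel_right₀ ha]

theorem orbit_piInvPiab_zero_zero (h : x * (a + c₀) = c₀) (hx0 : x ≠ 0) (hc₀ : c₀ ≠ 0)
    (ha : a ≠ 0) (hx : ∀ z : ZMod p, z ≠ 0 → ∃ k : ℕ, x ^ k = z) :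
    orbit (piInvPiab x a 0) (0, 0) = {q | q.1 ≠ c₀} := by
  set f := piInvPiab x a 0
  ext q
  constructor
  · rintro ⟨k, rfl⟩ hk
    have := fst_iterate_piInvPiab_zero_sub h (0, 0) k
    rw [hk, sub_self, eq_comm] at this
    exact mul_ne_zero (pow_ne_zero k hx0) (by simpa using hc₀) this
  · intro hq
    have hq' : q.1 - c₀ ≠ 0 := sub_ne_zero.2 hq
    obtain ⟨r, hr⟩ := hx (-c₀ * (q.1 - c₀)⁻¹) (mul_ne_zero (neg_ne_zero.2 hc₀) (inv_ne_zero hq'))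
    have hr0 : (f^[r] q).1 = 0 := by
      have := fst_iterate_piInvPiab_zero_sub h q r
      rw [hr, inv_mul_cancel_right₀ hq'] at this
      linear_combination this
    have hmem : f^[r] q ∈ orbit f (0, 0) := by
      rw [← Prod.mk.eta (p := f^[r] q), hr0]
      exact mem_orbit_piInvPiab_zero_zero h hx0 hc₀ ha _
    have hinj := injective_piInvPiab_zero (a := a) hx0
    rw [← orbit_eq_of_mem_orbit hinj hmem, orbit_eq_of_mem_orbit hinj ⟨r, rfl⟩]
    exact ⟨0, rfl⟩

end

/-- For `a ≠ 0`, the permutation `π⁻¹ ∘ π_{(a,0)}` has exactly one fixed point,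
namely `(a·(y−1)⁻¹, 0)` (with `y = x⁻¹`), and exactly two orbits of size at least 2:
one is precisely `{(a·(y−1)⁻¹, d) : d ≠ 0}` of size `p − 1`, and the other has size
`p² − p` and contains `(0,0)`. -/
theorem stmt15 (p : ℕ) (hp : p.Prime) (hodd : Odd p) (x : ZMod p)
    (hx : ∀ z : ZMod p, z ≠ 0 → ∃ k : ℕ, x ^ k = z) (a : ZMod p) (ha : a ≠ 0) :
    (∀ cd : ZMod p × ZMod p,
      piInvPiab x a 0 cd = cd ↔ cd = (a * (x⁻¹ - 1)⁻¹, 0)) ∧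
    ∃ u v : ZMod p × ZMod p,
      orbit (piInvPiab x a 0) u =
        {q : ZMod p × ZMod p | q.1 = a * (x⁻¹ - 1)⁻¹ ∧ q.2 ≠ 0} ∧
      (orbit (piInvPiab x a 0) u).ncard = p - 1 ∧
      (orbit (piInvPiab x a 0) v).ncard = p ^ 2 - p ∧
      (0, 0) ∈ orbit (piInvPiab x a 0) v ∧
      ∀ w : ZMod p × ZMod p, 2 ≤ (orbit (piInvPiab x a 0) w).ncard →
        orbit (piInvPiab x a 0) w = orbit (piInvPiab x a 0) u ∨
        orbit (piInvPiab x a 0) w = orbit (piInvPiab x a 0) v := by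
  have : Fact p.Prime := ⟨hp⟩
  have : Fact (2 < p) := ⟨hp.two_le.lt_of_ne' (by rintro rfl; exact absurd hodd (by decide))⟩
  obtain ⟨hx0, hx1⟩ := ne_zero_and_ne_one_of_forall_pow_eq ZMod.neg_one_ne_one hx
  set c₀ := a * (x⁻¹ - 1)⁻¹
  have h : x * (a + c₀) = c₀ := mul_add_mul_inv_sub_one hx0 hx1 a
  have hc₀ : c₀ ≠ 0 := mul_ne_zero ha (inv_ne_zero (sub_ne_zero.2 (inv_ne_one.2 hx1)))
  have hinj := injective_piInvPiab_zero (a := a) hx0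
  have horb₁ := orbit_piInvPiab_zero_of_fst_eq h hx0 hc₀ hx
  have horb₂ := orbit_piInvPiab_zero_zero h hx0 hc₀ ha hx
  refine ⟨fun q => isFixedPt_piInvPiab_zero_iff h hx1 hc₀, (c₀, 1), (0, 0), horb₁,
    by rw [horb₁, ncard_fst_eq_snd_ne, Nat.card_zmod],
    by rw [horb₂, ncard_fst_ne, Nat.card_zmod], ⟨0, rfl⟩, fun w hw => ?_⟩
  by_cases hw₁ : w.1 = c₀
  · have hw₂ : w.2 ≠ 0 := by
      intro hw₂
      have hfix := (isFixedPt_piInvPiab_zero_iff h hx1 hc₀).2 (Prod.ext hw₁ hw₂)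
      rw [orbit_eq_singleton hfix, Set.ncard_singleton] at hw
      omega
    exact .inl (orbit_eq_of_mem_orbit hinj (horb₁ ▸ ⟨hw₁, hw₂⟩))
  · exact .inr (orbit_eq_of_mem_orbit hinj (horb₂ ▸ hw₁))
end

section
/- Let p ≥ 5 be an odd prime, let x ∈ ZMod p be a primitive root mod p, and let y = x⁻¹. For every i ∈ ZMod p, every orbit of size at least 2 of the permutation of ZMod p given by a ↦ (a + i)·y contains at least one element of the set {0, 1} and at least one element of its complement ZMod p \ {0, 1}. -/
theorem orbit_eq_singleton_of_isFixedPt {α : Type*} {f : α → α} {u : α} (h : f u = u) :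
    orbit f u = {u} := by
  ext v
  simp only [orbit, Set.mem_ofPred_eq, Set.mem_singleton_iff, Function.iterate_fixed h]
  exact ⟨fun ⟨_, hv⟩ => hv.symm, fun hv => ⟨0, hv.symm⟩⟩

theorem Finset.exists_notMem_of_card_lt_card_univ {α : Type*} [Fintype α] (s : Finset α)
    (h : s.card < Fintype.card α) : ∃ a, a ∉ s := by
  obtain ⟨a, -, ha⟩ := Finset.exists_mem_notMem_of_card_lt_card (s := s) (t := Finset.univ) h
  exact ⟨a, ha⟩

theorem exists_inv_pow_eq {G₀ : Type*} [GroupWithZero G₀] {x : G₀}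
    (hx : ∀ z : G₀, z ≠ 0 → ∃ k : ℕ, x ^ k = z) (z : G₀) (hz : z ≠ 0) :
    ∃ k : ℕ, x⁻¹ ^ k = z := by
  obtain ⟨k, hk⟩ := hx z⁻¹ (inv_ne_zero hz)
  exact ⟨k, by rw [inv_pow, hk, inv_inv]⟩

theorem ne_one_of_forall_exists_pow_eq {M₀ : Type*} [MonoidWithZero M₀] {y z : M₀}
    (hy : ∀ w : M₀, w ≠ 0 → ∃ k : ℕ, y ^ k = w) (hz₀ : z ≠ 0) (hz₁ : z ≠ 1) : y ≠ 1 := by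
  rintro rfl
  obtain ⟨k, hk⟩ := hy z hz₀
  exact hz₁ (by rw [← hk, one_pow])

section Affine

variable {K : Type*} [Field K] {i y s : K}

theorem exists_add_mul_eq_self (hy : y ≠ 1) (i : K) : ∃ s : K, (s + i) * y = s :=
  ⟨i * y / (1 - y), by field_simp [sub_ne_zero.mpr hy.symm]; ring⟩

theorem iterate_add_mul_eq (hs : (s + i) * y = s) (k : ℕ) (u : K) :
    (fun a : K => (a + i) * y)^[k] u = y ^ k * (u - s) + s := by
  induction k with
  | zero => simp
  | succ k ih =>
    rw [Function.iterate_succ_apply', ih, pow_succ]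
    linear_combination hs

theorem mem_orbit_add_mul_of_ne (hy : ∀ w : K, w ≠ 0 → ∃ k : ℕ, y ^ k = w)
    (hs : (s + i) * y = s) {u t : K} (hu : u ≠ s) (ht : t ≠ s) :
    t ∈ orbit (fun a : K => (a + i) * y) u := by
  have hus : u - s ≠ 0 := sub_ne_zero.mpr hu
  obtain ⟨k, hk⟩ := hy ((t - s) / (u - s)) (div_ne_zero (sub_ne_zero.mpr ht) hus)
  refine ⟨k, ?_⟩
  rw [iterate_add_mul_eq hs, hk, div_mul_cancel₀ _ hus, sub_add_cancel]

end Affine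

theorem stmt19_general (p : ℕ) (hp : p.Prime) (hp5 : 5 ≤ p) (x : ZMod p)
    (hx : ∀ z : ZMod p, z ≠ 0 → ∃ k : ℕ, x ^ k = z) :
    ∀ (i : ZMod p) (u : ZMod p),
      2 ≤ (orbit (fun a : ZMod p => (a + i) * x⁻¹) u).ncard →
        (∃ a ∈ orbit (fun a : ZMod p => (a + i) * x⁻¹) u, a = 0 ∨ a = 1) ∧
        (∃ a ∈ orbit (fun a : ZMod p => (a + i) * x⁻¹) u, a ≠ 0 ∧ a ≠ 1) := by
  intro i u hcard
  have : Fact p.Prime := ⟨hp⟩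
  have hsmall (t : Finset (ZMod p)) (ht : t.card ≤ 3) : ∃ a, a ∉ t :=
    t.exists_notMem_of_card_lt_card_univ (by rw [ZMod.card]; omega)
  obtain ⟨z, hz⟩ := hsmall {0, 1} (Finset.card_le_two.trans (by norm_num))
  simp only [Finset.mem_insert, Finset.mem_singleton, not_or] at hz
  have hy := exists_inv_pow_eq hx
  obtain ⟨s, hs⟩ := exists_add_mul_eq_self (ne_one_of_forall_exists_pow_eq hy hz.1 hz.2) i
  have hu : u ≠ s := by
    rintro rfl
    rw [orbit_eq_singleton_of_isFixedPt hs, Set.ncard_singleton] at hcard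
    omega
  have hmem (t : ZMod p) (ht : t ≠ s) := mem_orbit_add_mul_of_ne hy hs hu ht
  obtain ⟨a, ha⟩ := hsmall {0, 1, s} Finset.card_le_three
  simp only [Finset.mem_insert, Finset.mem_singleton, not_or] at ha
  refine ⟨?_, a, hmem a ha.2.2, ha.1, ha.2.1⟩
  by_cases hs₀ : s = 0
  · exact ⟨1, hmem 1 (hs₀ ▸ one_ne_zero), Or.inr rfl⟩
  · exact ⟨0, hmem 0 (Ne.symm hs₀), Or.inl rfl⟩

/-- For `p ≥ 5` and every `i`, every orbit of size at least 2 of the permutation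
`a ↦ (a + i)·y` of `ZMod p` (with `y = x⁻¹`) contains at least one element of
`{0, 1}` and at least one element of its complement. -/
theorem stmt19 (p : ℕ) (hp : p.Prime) (hodd : Odd p) (hp5 : 5 ≤ p) (x : ZMod p)
    (hx : ∀ z : ZMod p, z ≠ 0 → ∃ k : ℕ, x ^ k = z) :
    ∀ (i : ZMod p) (u : ZMod p),
      2 ≤ (orbit (fun a : ZMod p => (a + i) * x⁻¹) u).ncard →
        (∃ a ∈ orbit (fun a : ZMod p => (a + i) * x⁻¹) u, a = 0 ∨ a = 1) ∧
        (∃ a ∈ orbit (fun a : ZMod p => (a + i) * x⁻¹) u, a ≠ 0 ∧ a ≠ 1) :=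
  stmt19_general p hp hp5 x hx
end
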